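/- Euler's identity: as formal power series in x and t, the sum over n ≥ 0 of x^n/(t;t)_n equals 1/(x;t)_∞, where (x;t)_∞ = ∏_{i≥0}(1 - x t^i). -/

import Mathlib

/-!
Put `S(x) = ∑ xⁿ / (t;t)ₙ`. Since `(t;t)ₙ₊₁ = (t;t)ₙ (1 - tⁿ⁺¹)`, a shift of summation index gives the
`q`-difference equation `(1 - x) S(x) = S(t x)`, hence `(x;t)_N S(x) = S(t^N x)`. As `N → ∞` the
left side tends to `(x;t)_∞ S(x)` and the right side to `S(0) = 1`: `S` is continuous at `0` by
dominated convergence, because `(t;t)ₙ` converges to the nonzero `(t;t)_∞`, so `1 / (t;t)ₙ` is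
bounded.
-/

open Finset Filter Topology

/-- `(t;t)ₙ`. -/
noncomputable def qPochhammer (t : ℝ) (n : ℕ) : ℝ := ∏ i ∈ range n, (1 - t ^ (i + 1))

noncomputable def eulerSeries (t x : ℝ) : ℝ := ∑' n : ℕ, x ^ n / qPochhammer t n

section

variable {t : ℝ}

lemma one_sub_pow_ne_zero_of_abs_lt_one (ht : |t| < 1) {n : ℕ} (hn : n ≠ 0) :
    1 - t ^ n ≠ 0 := by
  rw [sub_ne_zero, ne_comm]
  exact fun h => (pow_lt_one₀ (abs_nonneg t) ht hn).ne (by rw [← abs_pow, h, abs_one])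

lemma abs_pow_mul_lt_one (ht : |t| < 1) {x : ℝ} (hx : |x| < 1) (N : ℕ) : |t ^ N * x| < 1 := by
  rw [abs_mul, abs_pow]
  exact mul_lt_one_of_nonneg_of_lt_one_right (pow_le_one₀ (abs_nonneg t) ht.le) (abs_nonneg x) hx

lemma multipliable_one_sub_mul_pow (x : ℝ) (ht : |t| < 1) :
    Multipliable fun i : ℕ => 1 - x * t ^ i := by
  simpa [sub_eq_add_neg] using Real.multipliable_one_add_of_summable
    ((summable_geometric_of_abs_lt_one ht).mul_left x).neg

lemma tendsto_qPochhammer (ht : |t| < 1) :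
    Tendsto (qPochhammer t) atTop (𝓝 (∏' i : ℕ, (1 - t ^ (i + 1)))) := by
  have h := (multipliable_one_sub_mul_pow t ht).hasProd.tendsto_prod_nat
  simp_rw [← pow_succ'] at h
  exact h

lemma tprod_one_sub_pow_succ_ne_zero (ht : |t| < 1) : ∏' i : ℕ, (1 - t ^ (i + 1)) ≠ 0 := by
  simpa [sub_eq_add_neg] using tprod_one_add_ne_zero_of_summable (f := fun i : ℕ => -t ^ (i + 1))
    (fun i => by
      simpa [← sub_eq_add_neg] using one_sub_pow_ne_zero_of_abs_lt_one ht i.succ_ne_zero)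
    (by simpa [pow_succ'] using (summable_geometric_of_lt_one (abs_nonneg t) ht).mul_left |t|)

lemma exists_abs_inv_qPochhammer_le (ht : |t| < 1) : ∃ B, ∀ n, |(qPochhammer t n)⁻¹| ≤ B := by
  obtain ⟨B, hB⟩ :=
    ((tendsto_qPochhammer ht).inv₀ (tprod_one_sub_pow_succ_ne_zero ht)).abs.bddAbove_range
  exact ⟨B, fun n => hB ⟨n, rfl⟩⟩

lemma qPochhammer_ne_zero (ht : |t| < 1) (n : ℕ) : qPochhammer t n ≠ 0 :=
  prod_ne_zero_iff.2 fun i _ => one_sub_pow_ne_zero_of_abs_lt_one ht i.succ_ne_zero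

lemma qPochhammer_succ (t : ℝ) (n : ℕ) :
    qPochhammer t (n + 1) = qPochhammer t n * (1 - t ^ (n + 1)) :=
  prod_range_succ _ _

lemma abs_pow_div_qPochhammer_le {B : ℝ} (hB : ∀ n, |(qPochhammer t n)⁻¹| ≤ B) (y : ℝ) (n : ℕ) :
    |y ^ n / qPochhammer t n| ≤ B * |y| ^ n := by
  rw [div_eq_mul_inv, abs_mul, abs_pow, mul_comm]
  exact mul_le_mul_of_nonneg_right (hB n) (by positivity)

lemma summable_pow_div_qPochhammer (ht : |t| < 1) {x : ℝ} (hx : |x| < 1) :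
    Summable fun n : ℕ => x ^ n / qPochhammer t n := by
  obtain ⟨B, hB⟩ := exists_abs_inv_qPochhammer_le ht
  exact .of_norm_bounded ((summable_geometric_of_lt_one (abs_nonneg x) hx).mul_left B)
    (abs_pow_div_qPochhammer_le hB x)

lemma eulerSeries_zero (t : ℝ) : eulerSeries t 0 = 1 := by
  rw [eulerSeries, tsum_eq_single 0 fun n hn => by simp [zero_pow hn]]
  simp [qPochhammer]

lemma continuousAt_eulerSeries_zero (ht : |t| < 1) : ContinuousAt (eulerSeries t) 0 := by
  obtain ⟨B, hB⟩ := exists_abs_inv_qPochhammer_le ht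
  have hB_nonneg : 0 ≤ B := (abs_nonneg _).trans (hB 0)
  have h_small : ∀ᶠ y in 𝓝 (0 : ℝ), |y| ≤ 2⁻¹ := by
    filter_upwards [Metric.closedBall_mem_nhds (0 : ℝ) (by norm_num : (0 : ℝ) < 2⁻¹)] with y hy
    simpa using hy
  change Tendsto (fun y => ∑' n, y ^ n / qPochhammer t n) (𝓝 0)
    (𝓝 (∑' n, (0 : ℝ) ^ n / qPochhammer t n))
  refine tendsto_tsum_of_dominated_convergence (bound := fun n => B * 2⁻¹ ^ n)
    ((summable_geometric_of_lt_one (by norm_num) (by norm_num)).mul_left B)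
    (fun n => ((continuous_pow n).tendsto 0).div_const _) ?_
  filter_upwards [h_small] with y hy n
  exact (abs_pow_div_qPochhammer_le hB y n).trans (by gcongr)

lemma one_sub_mul_eulerSeries (ht : |t| < 1) {x : ℝ} (hx : |x| < 1) :
    (1 - x) * eulerSeries t x = eulerSeries t (t * x) := by
  have hs := summable_pow_div_qPochhammer ht hx
  have hts := summable_pow_div_qPochhammer (x := t * x) ht
    (by simpa using abs_pow_mul_lt_one ht hx 1)
  have hshift (n : ℕ) :
      x ^ (n + 1) / qPochhammer t (n + 1) - (t * x) ^ (n + 1) / qPochhammer t (n + 1) =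
        x * (x ^ n / qPochhammer t n) := by
    have := one_sub_pow_ne_zero_of_abs_lt_one ht n.succ_ne_zero
    rw [qPochhammer_succ]
    field_simp [qPochhammer_ne_zero ht n]
    ring
  suffices eulerSeries t x - eulerSeries t (t * x) = x * eulerSeries t x by
    linear_combination this
  rw [eulerSeries, eulerSeries, ← hs.tsum_sub hts, (hs.sub hts).tsum_eq_zero_add,
    ← tsum_mul_left]
  simp [hshift]

lemma prod_mul_eulerSeries (ht : |t| < 1) {x : ℝ} (hx : |x| < 1) (N : ℕ) :
    (∏ k ∈ range N, (1 - x * t ^ k)) * eulerSeries t x = eulerSeries t (t ^ N * x) := by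
  induction N with
  | zero => simp
  | succ N ih =>
    rw [prod_range_succ, pow_succ', mul_assoc t,
      ← one_sub_mul_eulerSeries ht (abs_pow_mul_lt_one ht hx N), ← ih]
    ring

end

/-- Euler's identity: for `|t| < 1` and `|x| < 1`,
`∑_{n≥0} x^n / (t;t)_n = 1 / (x;t)_∞ = (∏_{i≥0} (1 - x t^i))⁻¹`. -/
theorem stmt_6 (t x : ℝ) (ht : |t| < 1) (hx : |x| < 1) :
    ∑' n : ℕ, x ^ n / ∏ i ∈ Finset.range n, (1 - t ^ (i + 1)) =
      (∏' i : ℕ, (1 - x * t ^ i))⁻¹ := by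
  have h_partial := (multipliable_one_sub_mul_pow x ht).hasProd.tendsto_prod_nat.mul_const
    (eulerSeries t x)
  simp_rw [prod_mul_eulerSeries ht hx] at h_partial
  have h_one : Tendsto (fun N : ℕ => eulerSeries t (t ^ N * x)) atTop (𝓝 1) := by
    rw [← eulerSeries_zero t]
    refine (continuousAt_eulerSeries_zero ht).tendsto.comp ?_
    simpa using (tendsto_pow_atTop_nhds_zero_of_abs_lt_one ht).mul_const x
  exact eq_inv_of_mul_eq_one_right (tendsto_nhds_unique h_partial h_one)
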